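/- Let b ≥ 1, 0 < m ≤ M, and for 0 ≤ j ≤ 2^b + 1 set p_j = m^{(2^b+1−j)/(2^b+1)} · M^{j/(2^b+1)}. For every 1 ≤ i < 2^b and every price sequence σ of length n ≥ 1 with all prices in [m, M], if p_i ≤ max_k σ k < p_{i+1}, then max_k σ k ≤ (M/m)^{1/(2^b+1)} · profit(RPP(p_i), σ). -/
import Mathlib


/-- The maximum price of a price sequence of positive length. -/
noncomputable def maxPrice {n : ℕ} (hn : 0 < n) (σ : Fin n → ℝ) : ℝ :=
  Finset.univ.sup' ⟨⟨0, hn⟩, Finset.mem_univ _⟩ σ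

/-- The profit of the reservation-price strategy `RPP p` on the price sequence
`σ`: it accepts at the least index `k` with `σ k ≥ p`, obtaining `σ k`; if no
such index exists it must accept the last price `σ (n-1)`. -/
noncomputable def rppProfit {n : ℕ} (hn : 0 < n) (p : ℝ) (σ : Fin n → ℝ) : ℝ :=
  if h : ∃ k : Fin n, p ≤ σ k then
    σ ((Finset.univ.filter (fun k : Fin n => p ≤ σ k)).min'
      (h.imp fun k hk => Finset.mem_filter.mpr ⟨Finset.mem_univ _, hk⟩))
  else σ ⟨n - 1, Nat.sub_lt hn one_pos⟩

/-- (Third case of the upper-bound proof.) With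
`p_j = m^{(2^b+1-j)/(2^b+1)} M^{j/(2^b+1)}`, for every `1 ≤ i < 2^b`, if the
maximum price of `σ` lies in `[p_i, p_{i+1})`, then `RPP(p_i)` is
`(M/m)^{1/(2^b+1)}`-competitive on `σ`. -/
theorem rpp_competitive_intermediate_case
    (b : ℕ) (hb : 1 ≤ b) (m M : ℝ) (hm : 0 < m) (hmM : m ≤ M)
    (n : ℕ) (hn : 0 < n) (σ : Fin n → ℝ) (hσ : ∀ i, m ≤ σ i ∧ σ i ≤ M)
    (p : ℕ → ℝ)
    (hp : ∀ j : ℕ, j ≤ 2 ^ b + 1 →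
      p j = m ^ ((2 ^ b + 1 - (j : ℝ)) / (2 ^ b + 1)) * M ^ ((j : ℝ) / (2 ^ b + 1)))
    (i : ℕ) (hi1 : 1 ≤ i) (hi2 : i < 2 ^ b)
    (hmax : p i ≤ maxPrice hn σ) (hmax' : maxPrice hn σ < p (i + 1)) :
    maxPrice hn σ ≤ (M / m) ^ ((1 : ℝ) / (2 ^ b + 1)) * rppProfit hn (p i) σ := by
  have hM : 0 < M := lt_of_lt_of_le hm hmM
  set N : ℝ := 2 ^ b + 1 with hN
  have hNpos : (0 : ℝ) < N := by positivity
  have hi' : i ≤ 2 ^ b + 1 := by omega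
  have hi'' : i + 1 ≤ 2 ^ b + 1 := by omega
  -- the factor is positive
  have hc : (0 : ℝ) < (M / m) ^ ((1 : ℝ) / N) :=
    Real.rpow_pos_of_pos (div_pos hM hm) _
  -- p (i+1) = (M/m)^(1/N) * p i
  have hratio : p (i + 1) = (M / m) ^ ((1 : ℝ) / N) * p i := by
    rw [hp i hi', hp (i + 1) hi'']
    push_cast
    rw [Real.div_rpow hM.le hm.le,
      show (2 ^ b + 1 - ((i : ℝ) + 1)) / N = (2 ^ b + 1 - (i : ℝ)) / N - 1 / N by
        rw [hN]; ring,
      show ((i : ℝ) + 1) / N = (i : ℝ) / N + 1 / N by rw [hN]; ring,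
      Real.rpow_sub hm, Real.rpow_add hM]
    have h1 : m ^ ((1 : ℝ) / N) ≠ 0 := ne_of_gt (Real.rpow_pos_of_pos hm _)
    field_simp
    ring
  -- there is an index achieving at least p i
  have hex : ∃ k : Fin n, p i ≤ σ k := by
    obtain ⟨k, _, hk⟩ := Finset.exists_mem_eq_sup'
      (⟨⟨0, hn⟩, Finset.mem_univ _⟩ : Finset.univ.Nonempty) σ
    exact ⟨k, by rw [maxPrice, hk] at hmax; exact hmax⟩
  -- the profit is at least p i
  have hprofit : p i ≤ rppProfit hn (p i) σ := by
    rw [rppProfit, dif_pos hex]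
    have hmem := Finset.min'_mem (Finset.univ.filter (fun k : Fin n => p i ≤ σ k))
      (hex.imp fun k hk => Finset.mem_filter.mpr ⟨Finset.mem_univ _, hk⟩)
    exact (Finset.mem_filter.mp hmem).2
  calc maxPrice hn σ ≤ p (i + 1) := hmax'.le
    _ = (M / m) ^ ((1 : ℝ) / N) * p i := hratio
    _ ≤ (M / m) ^ ((1 : ℝ) / N) * rppProfit hn (p i) σ :=
        mul_le_mul_of_nonneg_left hprofit hc.le
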